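/- Let A : [τ₁, τ₂] → GL(n, ℝ) be smooth with A'(t)A(t)^(-1) symmetric, satisfying A''(t) + (1/(2t))A'(t) = M(t)A(t) with M(t) symmetric, and let f(t) = log det A(t). Then t^(-3/2) · d/dt[t^(3/2)·f'(t)] ≤ tr(M(t)) + n/(4t²) for all t ∈ [τ₁, τ₂]. -/

import Mathlib

/-! Put `P = A' A⁻¹`. Jacobi's formula gives `f' = tr P`, and differentiating `A⁻¹` gives
`f'' = tr (A'' A⁻¹) - tr (P²)`, which the equation for `A` turns into `tr M - tr P / (2t) - tr P²`.
Hence `f'' + 3/(2t) f' = tr M + tr P / t - tr P²`. For symmetric `P`, `tr P² ≥ ∑ Pᵢᵢ²`, and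
`Pᵢᵢ / t - Pᵢᵢ² ≤ 1/(4t²)` for each of the `n` diagonal entries. -/

open Set Matrix

section Algebra

variable {m : Type*} [Fintype m]

theorem Matrix.IsSymm.sum_diag_sq_le_trace_mul_self {R : Type*} [CommRing R] [LinearOrder R]
    [IsStrictOrderedRing R] {P : Matrix m m R} (hP : P.IsSymm) :
    ∑ i, P i i ^ 2 ≤ trace (P * P) := by
  have hsq : trace (P * P) = ∑ i, ∑ j, P i j ^ 2 := by
    refine Finset.sum_congr rfl fun i _ => Finset.sum_congr rfl fun j _ => ?_
    simp only [hP.apply i j, sq]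
  rw [hsq]
  exact Finset.sum_le_sum fun i _ =>
    Finset.single_le_sum (f := fun j => P i j ^ 2) (fun j _ => sq_nonneg _) (Finset.mem_univ i)

theorem Matrix.IsSymm.mul_trace_sub_trace_mul_self_le {P : Matrix m m ℝ} (hP : P.IsSymm)
    (c : ℝ) : c * trace P - trace (P * P) ≤ Fintype.card m * c ^ 2 / 4 := by
  have hdiag (x : ℝ) : c * x - x ^ 2 ≤ c ^ 2 / 4 := by nlinarith [sq_nonneg (x - c / 2)]
  calc c * trace P - trace (P * P) ≤ ∑ i, (c * P i i - P i i ^ 2) := by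
        rw [Finset.sum_sub_distrib, ← Finset.mul_sum]
        exact sub_le_sub_left hP.sum_diag_sq_le_trace_mul_self _
    _ ≤ ∑ _i : m, c ^ 2 / 4 := Finset.sum_le_sum fun i _ => hdiag (P i i)
    _ = Fintype.card m * c ^ 2 / 4 := by simp [mul_div_assoc]

theorem Matrix.trace_adjugate_mul {R : Type*} [CommRing R] [DecidableEq m] (C B : Matrix m m R) :
    trace (adjugate C * B) = ∑ i, (C.updateCol i fun j => B j i).det := by
  refine Finset.sum_congr rfl fun i _ => ?_
  rw [← cramer_apply, cramer_eq_adjugate_mulVec]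
  rfl

end Algebra

section Calculus

variable {l m n : Type*} [Fintype m] {s : Set ℝ} {t : ℝ}

theorem hasDerivWithinAt_matrix_mul_apply {A : ℝ → Matrix l m ℝ} {B : ℝ → Matrix m n ℝ}
    {A' : Matrix l m ℝ} {B' : Matrix m n ℝ}
    (hA : ∀ i j, HasDerivWithinAt (fun u => A u i j) (A' i j) s t)
    (hB : ∀ i j, HasDerivWithinAt (fun u => B u i j) (B' i j) s t) (i : l) (j : n) :
    HasDerivWithinAt (fun u => (A u * B u) i j) ((A' * B t + A t * B') i j) s t := by
  simp only [mul_apply, Matrix.add_apply, ← Finset.sum_add_distrib]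
  exact HasDerivWithinAt.fun_sum fun k _ => (hA i k).fun_mul (hB k j)

theorem hasDerivWithinAt_matrix_trace {A : ℝ → Matrix m m ℝ} {A' : Matrix m m ℝ}
    (hA : ∀ i j, HasDerivWithinAt (fun u => A u i j) (A' i j) s t) :
    HasDerivWithinAt (fun u => trace (A u)) (trace A') s t :=
  HasDerivWithinAt.fun_sum fun i _ => hA i i

variable [DecidableEq m] {A : ℝ → Matrix m m ℝ} {A' : Matrix m m ℝ}

theorem hasDerivWithinAt_det (hA : ∀ i j, HasDerivWithinAt (fun u => A u i j) (A' i j) s t) :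
    HasDerivWithinAt (fun u => (A u).det) (trace (adjugate (A t) * A')) s t := by
  have hLeibniz := HasDerivWithinAt.fun_sum (u := Finset.univ) fun (σ : Equiv.Perm m) _ =>
    (HasDerivWithinAt.fun_finsetProd (u := Finset.univ) fun i _ => hA (σ i) i).const_mul
      ((Equiv.Perm.sign σ : ℤ) : ℝ)
  simp only [← det_apply'] at hLeibniz
  -- the `i`-th term of the differentiated Leibniz formula is `det` with column `i` replaced
  refine hLeibniz.congr_deriv ?_
  simp only [trace_adjugate_mul, det_apply', Finset.mul_sum]
  rw [Finset.sum_comm]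
  refine Finset.sum_congr rfl fun i _ => Finset.sum_congr rfl fun σ _ => ?_
  rw [← Finset.mul_prod_erase Finset.univ (fun k => (A t).updateCol i (fun j => A' j i) (σ k) k)
    (Finset.mem_univ i), updateCol_self,
    Finset.prod_congr rfl fun k hk => updateCol_ne (Finset.ne_of_mem_erase hk), smul_eq_mul]
  ring

theorem hasDerivWithinAt_log_det (hA : ∀ i j, HasDerivWithinAt (fun u => A u i j) (A' i j) s t)
    (hdet : (A t).det ≠ 0) :
    HasDerivWithinAt (fun u => Real.log (A u).det) (trace (A' * (A t)⁻¹)) s t := by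
  refine ((hasDerivWithinAt_det hA).log hdet).congr_deriv ?_
  rw [trace_mul_comm, inv_def, Ring.inverse_eq_inv', Matrix.mul_smul, trace_smul, smul_eq_mul,
    div_eq_inv_mul]

theorem differentiableWithinAt_matrix_inv_apply
    (hA : ∀ i j, HasDerivWithinAt (fun u => A u i j) (A' i j) s t) (hdet : (A t).det ≠ 0)
    (i j : m) : DifferentiableWithinAt ℝ (fun u => (A u)⁻¹ i j) s t := by
  have hrow : ∀ a b, HasDerivWithinAt (fun u => (A u).updateRow j (Pi.single i 1) a b)
      (A'.updateRow j 0 a b) s t := by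
    intro a b
    rcases eq_or_ne a j with rfl | hne
    · simpa only [updateRow_self, Pi.zero_apply] using hasDerivWithinAt_const t s _
    · simpa only [updateRow_ne hne] using hA a b
  have hadj : DifferentiableWithinAt ℝ (fun u => adjugate (A u) i j) s t := by
    simpa only [adjugate_apply] using (hasDerivWithinAt_det hrow).differentiableWithinAt
  refine (((hasDerivWithinAt_det hA).differentiableWithinAt.fun_inv hdet).fun_mul hadj).congr
    (fun u _ => ?_) ?_ <;>
    rw [inv_def, Matrix.smul_apply, Ring.inverse_eq_inv', smul_eq_mul]

theorem hasDerivWithinAt_matrix_inv_apply (hs : UniqueDiffWithinAt ℝ s t) (ht : t ∈ s)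
    (hinv : ∀ u ∈ s, IsUnit (A u).det)
    (hA : ∀ i j, HasDerivWithinAt (fun u => A u i j) (A' i j) s t) (i j : m) :
    HasDerivWithinAt (fun u => (A u)⁻¹ i j) ((-((A t)⁻¹ * A' * (A t)⁻¹)) i j) s t := by
  set D : Matrix m m ℝ := of fun i j => derivWithin (fun u => (A u)⁻¹ i j) s t
  have hD : ∀ i j, HasDerivWithinAt (fun u => (A u)⁻¹ i j) (D i j) s t := fun i j =>
    (differentiableWithinAt_matrix_inv_apply hA (hinv t ht).ne_zero i j).hasDerivWithinAt
  -- differentiating `A * A⁻¹ = 1` determines `D`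
  have hprod : A' * (A t)⁻¹ + A t * D = 0 := by
    ext a b
    have hone : ∀ u ∈ s, (A u * (A u)⁻¹) a b = (1 : Matrix m m ℝ) a b := fun u hu => by
      rw [mul_nonsing_inv _ (hinv u hu)]
    exact hs.eq_deriv _ (hasDerivWithinAt_matrix_mul_apply hA hD a b)
      ((hasDerivWithinAt_const t s _).congr hone (hone t ht))
  have hDeq : D = -((A t)⁻¹ * A' * (A t)⁻¹) := by
    rw [← nonsing_inv_mul_cancel_left (A := A t) D (hinv t ht), eq_neg_of_add_eq_zero_right hprod]
    simp only [mul_neg, Matrix.mul_assoc]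
  exact hDeq ▸ hD i j

theorem hasDerivWithinAt_trace_mul_inv (hs : UniqueDiffWithinAt ℝ s t) (ht : t ∈ s)
    (hinv : ∀ u ∈ s, IsUnit (A u).det)
    (hA : ∀ i j, HasDerivWithinAt (fun u => A u i j) (A' i j) s t)
    {B : ℝ → Matrix m m ℝ} {B' : Matrix m m ℝ}
    (hB : ∀ i j, HasDerivWithinAt (fun u => B u i j) (B' i j) s t) :
    HasDerivWithinAt (fun u => trace (B u * (A u)⁻¹))
      (trace (B' * (A t)⁻¹) - trace (B t * (A t)⁻¹ * (A' * (A t)⁻¹))) s t := by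
  refine (hasDerivWithinAt_matrix_trace
    (hasDerivWithinAt_matrix_mul_apply hB (hasDerivWithinAt_matrix_inv_apply hs ht hinv hA))).congr_deriv ?_
  simp only [trace_add, mul_neg, trace_neg, Matrix.mul_assoc, sub_eq_add_neg]

end Calculus

theorem logDet_differential_inequality_general
    {n : ℕ} {τ₁ τ₂ : ℝ} (h₂ : τ₁ < τ₂)
    {A A' A'' M : ℝ → Matrix (Fin n) (Fin n) ℝ}
    (hA : ∀ t ∈ Icc τ₁ τ₂, ∀ i j,
      HasDerivWithinAt (fun s => A s i j) (A' t i j) (Icc τ₁ τ₂) t)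
    (hA' : ∀ t ∈ Icc τ₁ τ₂, ∀ i j,
      HasDerivWithinAt (fun s => A' s i j) (A'' t i j) (Icc τ₁ τ₂) t)
    (hinv : ∀ t ∈ Icc τ₁ τ₂, IsUnit (A t).det)
    (hsymm : ∀ t ∈ Icc τ₁ τ₂, (A' t * (A t)⁻¹).IsSymm)
    (hODE : ∀ t ∈ Icc τ₁ τ₂, A'' t + (1 / (2 * t)) • A' t = M t * A t)
    {f' f'' : ℝ → ℝ}
    (hf : ∀ t ∈ Icc τ₁ τ₂,
      HasDerivWithinAt (fun s => Real.log (A s).det) (f' t) (Icc τ₁ τ₂) t)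
    (hf' : ∀ t ∈ Icc τ₁ τ₂, HasDerivWithinAt f' (f'' t) (Icc τ₁ τ₂) t) :
    ∀ t ∈ Icc τ₁ τ₂, f'' t + 3 / (2 * t) * f' t ≤ trace (M t) + n / (4 * t ^ 2) := by
  intro t ht
  have hU : UniqueDiffOn ℝ (Icc τ₁ τ₂) := uniqueDiffOn_Icc h₂
  set P := A' t * (A t)⁻¹
  have hf'_eq : ∀ u ∈ Icc τ₁ τ₂, f' u = trace (A' u * (A u)⁻¹) := fun u hu =>
    (hU u hu).eq_deriv _ (hf u hu) (hasDerivWithinAt_log_det (hA u hu) (hinv u hu).ne_zero)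
  have hf''_eq : f'' t = trace (A'' t * (A t)⁻¹) - trace (P * P) :=
    (hU t ht).eq_deriv _ (hf' t ht) <|
      (hasDerivWithinAt_trace_mul_inv (hU t ht) ht hinv (hA t ht) (hA' t ht)).congr
        hf'_eq (hf'_eq t ht)
  have hODE_trace : trace (A'' t * (A t)⁻¹) = trace (M t) - 1 / (2 * t) * trace P := by
    rw [eq_sub_of_add_eq (hODE t ht), Matrix.sub_mul, trace_sub,
      mul_nonsing_inv_cancel_right _ _ (hinv t ht), smul_mul, trace_smul, smul_eq_mul]
  have hquad := (hsymm t ht).mul_trace_sub_trace_mul_self_le t⁻¹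
  rw [Fintype.card_fin] at hquad
  calc f'' t + 3 / (2 * t) * f' t = trace (M t) + (t⁻¹ * trace P - trace (P * P)) := by
        rw [hf''_eq, hODE_trace, hf'_eq t ht]
        ring
    _ ≤ trace (M t) + n * t⁻¹ ^ 2 / 4 := by gcongr
    _ = trace (M t) + n / (4 * t ^ 2) := by ring

/-- If `A(t)` is a smooth family of invertible matrices with `A'(t) A(t)⁻¹` symmetric
solving `A''(t) + (1/(2t)) A'(t) = M(t) A(t)` with `M(t)` symmetric, and
`f(t) = log det A(t)`, then `f''(t) + (3/(2t)) f'(t) ≤ tr(M(t)) + n/(4t²)`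
on `[τ₁, τ₂]`. -/
theorem logDet_differential_inequality
    {n : ℕ} {τ₁ τ₂ : ℝ} (h₁ : 0 < τ₁) (h₂ : τ₁ < τ₂)
    {A A' A'' M : ℝ → Matrix (Fin n) (Fin n) ℝ}
    (hA : ∀ t ∈ Icc τ₁ τ₂, ∀ i j,
      HasDerivWithinAt (fun s => A s i j) (A' t i j) (Icc τ₁ τ₂) t)
    (hA' : ∀ t ∈ Icc τ₁ τ₂, ∀ i j,
      HasDerivWithinAt (fun s => A' s i j) (A'' t i j) (Icc τ₁ τ₂) t)
    (hinv : ∀ t ∈ Icc τ₁ τ₂, IsUnit (A t).det)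
    (hsymm : ∀ t ∈ Icc τ₁ τ₂, (A' t * (A t)⁻¹).IsSymm)
    (hODE : ∀ t ∈ Icc τ₁ τ₂, A'' t + (1 / (2 * t)) • A' t = M t * A t)
    (hMsymm : ∀ t ∈ Icc τ₁ τ₂, (M t).IsSymm)
    {f' f'' : ℝ → ℝ}
    (hf : ∀ t ∈ Icc τ₁ τ₂,
      HasDerivWithinAt (fun s => Real.log (A s).det) (f' t) (Icc τ₁ τ₂) t)
    (hf' : ∀ t ∈ Icc τ₁ τ₂, HasDerivWithinAt f' (f'' t) (Icc τ₁ τ₂) t) :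
    ∀ t ∈ Icc τ₁ τ₂, f'' t + 3 / (2 * t) * f' t ≤ trace (M t) + n / (4 * t ^ 2) :=
  logDet_differential_inequality_general h₂ hA hA' hinv hsymm hODE hf hf'
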